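/- arXiv:2101.06893 — 3 statements merged into one kernel-verified Lean document; each statement's English description precedes it below -/
import Mathlib

section
/- Let Λ_{a,b}(g)(t) = g(t) − sup_{s∈[0,t]} ( (g(s) − b)⁺ ∧ inf_{u∈[s,t]} (g(u) − a) ) for g ∈ D[0,∞). For real numbers c < a < b < d and any g ∈ D[0,∞) and T > 0, sup_{t∈[0,T]} |Λ_{a,b}(g)(t) − Λ_{c,d}(g)(t)| ≤ |a − c| + |b − d|. -/
open Set Filter

/-- `f` is right-continuous with left limits on `[0,∞)`. -/
def RCLLinf (f : ℝ → ℝ) : Prop :=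
  (∀ x ∈ Set.Ici (0:ℝ), ContinuousWithinAt f (Set.Ici x) x) ∧
  (∀ x ∈ Set.Ioi (0:ℝ), ∃ L : ℝ, Filter.Tendsto f (nhdsWithin x (Set.Iio x)) (nhds L))

/-- Upper-barrier correction map
`Λ_{a,b}(g)(t) = g(t) − sup_{s∈[0,t]} ((g(s)−b)⁺ ∧ inf_{u∈[s,t]} (g(u)−a))`. -/
noncomputable def Lambda (a b : ℝ) (g : ℝ → ℝ) (t : ℝ) : ℝ :=
  g t - sSup ((fun s =>
    min (max (g s - b) 0) (sInf ((fun u => g u - a) '' Set.Icc s t))) '' Set.Icc (0:ℝ) t)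

/-- If two functions are uniformly within `K` on a nonempty set, their infima over that set
are within `K`. -/
lemma abs_sInf_image_sub_le {S : Set ℝ} (f1 f2 : ℝ → ℝ) (hne : S.Nonempty) {K : ℝ}
    (hK : 0 ≤ K) (h : ∀ x ∈ S, |f1 x - f2 x| ≤ K) :
    |sInf (f1 '' S) - sInf (f2 '' S)| ≤ K := by
  have key : ∀ u v : ℝ → ℝ, (∀ x ∈ S, |u x - v x| ≤ K) → BddBelow (u '' S) →
      BddBelow (v '' S) := by
    intro u v huv ⟨m, hm⟩
    refine ⟨m - K, ?_⟩
    rintro y ⟨x, hx, rfl⟩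
    have h1 : m ≤ u x := hm ⟨x, hx, rfl⟩
    have h2 : u x - v x ≤ K := (abs_le.mp (huv x hx)).2
    linarith
  have hsym : ∀ x ∈ S, |f2 x - f1 x| ≤ K := fun x hx => by
    rw [abs_sub_comm]; exact h x hx
  by_cases hb : BddBelow (f1 '' S)
  · have hb2 : BddBelow (f2 '' S) := key f1 f2 h hb
    rw [abs_sub_le_iff]
    constructor
    · have : sInf (f1 '' S) - K ≤ sInf (f2 '' S) := by
        apply le_csInf (hne.image f2)
        rintro y ⟨x, hx, rfl⟩
        have h1 : sInf (f1 '' S) ≤ f1 x := csInf_le hb ⟨x, hx, rfl⟩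
        have h2 : f1 x - f2 x ≤ K := (abs_le.mp (h x hx)).2
        linarith
      linarith
    · have : sInf (f2 '' S) - K ≤ sInf (f1 '' S) := by
        apply le_csInf (hne.image f1)
        rintro y ⟨x, hx, rfl⟩
        have h1 : sInf (f2 '' S) ≤ f2 x := csInf_le hb2 ⟨x, hx, rfl⟩
        have h2 : f2 x - f1 x ≤ K := (abs_le.mp (hsym x hx)).2
        linarith
      linarith
  · have hb2 : ¬ BddBelow (f2 '' S) := fun hb2 => hb (key f2 f1 hsym hb2)
    rw [Real.sInf_of_not_bddBelow hb, Real.sInf_of_not_bddBelow hb2]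
    simpa using hK

/-- If two functions are uniformly within `K` on a nonempty set, their suprema over that set
are within `K`. -/
lemma abs_sSup_image_sub_le {S : Set ℝ} (f1 f2 : ℝ → ℝ) (hne : S.Nonempty) {K : ℝ}
    (hK : 0 ≤ K) (h : ∀ x ∈ S, |f1 x - f2 x| ≤ K) :
    |sSup (f1 '' S) - sSup (f2 '' S)| ≤ K := by
  have key : ∀ u v : ℝ → ℝ, (∀ x ∈ S, |u x - v x| ≤ K) → BddAbove (u '' S) →
      BddAbove (v '' S) := by
    intro u v huv ⟨m, hm⟩
    refine ⟨m + K, ?_⟩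
    rintro y ⟨x, hx, rfl⟩
    have h1 : u x ≤ m := hm ⟨x, hx, rfl⟩
    have h2 : v x - u x ≤ K := by
      have := (abs_le.mp (huv x hx)).1; linarith
    linarith
  have hsym : ∀ x ∈ S, |f2 x - f1 x| ≤ K := fun x hx => by
    rw [abs_sub_comm]; exact h x hx
  by_cases hb : BddAbove (f1 '' S)
  · have hb2 : BddAbove (f2 '' S) := key f1 f2 h hb
    rw [abs_sub_le_iff]
    constructor
    · have : sSup (f1 '' S) ≤ sSup (f2 '' S) + K := by
        apply csSup_le (hne.image f1)
        rintro y ⟨x, hx, rfl⟩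
        have h1 : f2 x ≤ sSup (f2 '' S) := le_csSup hb2 ⟨x, hx, rfl⟩
        have h2 : f1 x - f2 x ≤ K := (abs_le.mp (h x hx)).2
        linarith
      linarith
    · have : sSup (f2 '' S) ≤ sSup (f1 '' S) + K := by
        apply csSup_le (hne.image f2)
        rintro y ⟨x, hx, rfl⟩
        have h1 : f1 x ≤ sSup (f1 '' S) := le_csSup hb ⟨x, hx, rfl⟩
        have h2 : f2 x - f1 x ≤ K := (abs_le.mp (hsym x hx)).2
        linarith
      linarith
  · have hb2 : ¬ BddAbove (f2 '' S) := fun hb2 => hb (key f2 f1 hsym hb2)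
    rw [Real.sSup_of_not_bddAbove hb, Real.sSup_of_not_bddAbove hb2]
    simpa using hK

theorem lambda_barrier_lipschitz (a b c d : ℝ) (hca : c < a) (hab : a < b) (hbd : b < d)
    (g : ℝ → ℝ) (hg : RCLLinf g) (T : ℝ) (hT : 0 < T) :
    ∀ t ∈ Set.Icc (0:ℝ) T, |Lambda a b g t - Lambda c d g t| ≤ |a - c| + |b - d| := by
  intro t ht
  have ht0 : (0:ℝ) ≤ t := ht.1
  set K : ℝ := |a - c| + |b - d| with hKdef
  have hK : 0 ≤ K := by positivity
  have hpt : ∀ s ∈ Set.Icc (0:ℝ) t,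
      |min (max (g s - b) 0) (sInf ((fun u => g u - a) '' Set.Icc s t)) -
       min (max (g s - d) 0) (sInf ((fun u => g u - c) '' Set.Icc s t))| ≤ K := by
    intro s hs
    have hst : s ≤ t := hs.2
    have hne : (Set.Icc s t).Nonempty := ⟨t, hst, le_refl t⟩
    have hinf : |sInf ((fun u => g u - a) '' Set.Icc s t) -
        sInf ((fun u => g u - c) '' Set.Icc s t)| ≤ |a - c| := by
      apply abs_sInf_image_sub_le _ _ hne (abs_nonneg _)
      intro x _
      have : g x - a - (g x - c) = -(a - c) := by ring
      rw [this, abs_neg]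
    have hmax : |max (g s - b) 0 - max (g s - d) 0| ≤ |b - d| := by
      calc |max (g s - b) 0 - max (g s - d) 0| ≤ max |g s - b - (g s - d)| |(0:ℝ) - 0| :=
            abs_max_sub_max_le_max _ _ _ _
        _ ≤ |b - d| := by
            have : g s - b - (g s - d) = -(b - d) := by ring
            rw [this, abs_neg]
            simp
    calc |min (max (g s - b) 0) (sInf ((fun u => g u - a) '' Set.Icc s t)) -
         min (max (g s - d) 0) (sInf ((fun u => g u - c) '' Set.Icc s t))|
        ≤ max (|max (g s - b) 0 - max (g s - d) 0|)
            (|sInf ((fun u => g u - a) '' Set.Icc s t) -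
              sInf ((fun u => g u - c) '' Set.Icc s t)|) := abs_min_sub_min_le_max _ _ _ _
      _ ≤ K := by
          rw [hKdef]
          apply max_le <;> [skip; skip]
          · have := abs_nonneg (a - c); linarith
          · have := abs_nonneg (b - d); linarith
  have hne0 : (Set.Icc (0:ℝ) t).Nonempty := ⟨0, le_refl 0, ht0⟩
  have hsup := abs_sSup_image_sub_le
    (fun s => min (max (g s - b) 0) (sInf ((fun u => g u - a) '' Set.Icc s t)))
    (fun s => min (max (g s - d) 0) (sInf ((fun u => g u - c) '' Set.Icc s t)))
    hne0 hK hpt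
  have : Lambda a b g t - Lambda c d g t =
      -(sSup ((fun s => min (max (g s - b) 0)
          (sInf ((fun u => g u - a) '' Set.Icc s t))) '' Set.Icc (0:ℝ) t) -
        sSup ((fun s => min (max (g s - d) 0)
          (sInf ((fun u => g u - c) '' Set.Icc s t))) '' Set.Icc (0:ℝ) t)) := by
    simp only [Lambda]; ring
  rw [this, abs_neg]
  exact hsup
end

section
/- With b(t) = min{(ψ(0) − r(0))⁺, inf_{u∈[0,t]}(ψ(u) − l(u))} for ψ, l, r ∈ D[0,T], for any δ > 0 one has ω(b, δ, T) ≤ ω(ψ, δ, T) + ω(l, δ, T). -/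
open Set Filter

/-- `f` is right-continuous with left limits on `[0,T]`. -/
def RCLL (f : ℝ → ℝ) (T : ℝ) : Prop :=
  (∀ x ∈ Set.Ico (0:ℝ) T, ContinuousWithinAt f (Set.Ici x) x) ∧
  (∀ x ∈ Set.Ioc (0:ℝ) T, ∃ L : ℝ, Filter.Tendsto f (nhdsWithin x (Set.Iio x)) (nhds L))

/-- Modulus of continuity `ω(f, δ, T)`. -/
noncomputable def modCont (f : ℝ → ℝ) (δ T : ℝ) : ℝ :=
  sSup {y : ℝ | ∃ s ∈ Set.Icc (0:ℝ) T, ∃ t ∈ Set.Icc (0:ℝ) T, |t - s| < δ ∧ y = |f t - f s|}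

/-- Lower-barrier correction function
`b(t) = min{(ψ(0)−r(0))⁺, inf_{u∈[0,t]}(ψ(u)−l(u))}`. -/
noncomputable def bcorr (ψ l r : ℝ → ℝ) (t : ℝ) : ℝ :=
  min (max (ψ 0 - r 0) 0) (sInf ((fun u => ψ u - l u) '' Set.Icc (0:ℝ) t))

lemma rcll_local_bound (f : ℝ → ℝ) (T : ℝ) (hf : RCLL f T) :
    ∀ x : ℝ, ∃ U ∈ nhds x, ∃ M : ℝ,
      x ∈ Set.Icc (0:ℝ) T → ∀ y ∈ U ∩ Set.Icc (0:ℝ) T, |f y| ≤ M := by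
  intro x
  by_cases hx : x ∈ Set.Icc (0:ℝ) T
  swap
  · exact ⟨Set.univ, Filter.univ_mem, 0, fun h => absurd h hx⟩
  · obtain ⟨R, hR, MR, hMR⟩ :
        ∃ R ∈ nhds x, ∃ MR : ℝ, ∀ y ∈ R ∩ Set.Icc (0:ℝ) T, x ≤ y → |f y| ≤ MR := by
      rcases eq_or_lt_of_le hx.2 with h | h
      · refine ⟨Set.univ, Filter.univ_mem, |f x|, fun y hy hxy => ?_⟩
        have hyx : y = x := le_antisymm (h ▸ hy.2.2) hxy
        rw [hyx]
      · have hc := hf.1 x ⟨hx.1, h⟩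
        have h1 : f ⁻¹' Metric.ball (f x) 1 ∈ nhdsWithin x (Set.Ici x) :=
          hc (Metric.ball_mem_nhds (f x) one_pos)
        obtain ⟨U, hUo, hxU, hU⟩ := mem_nhdsWithin.1 h1
        refine ⟨U, hUo.mem_nhds hxU, |f x| + 1, fun y hy hxy => ?_⟩
        have hball := hU ⟨hy.1, hxy⟩
        have hd : |f y - f x| < 1 := by
          simpa [Real.dist_eq] using hball
        have h2 := abs_sub_abs_le_abs_sub (f y) (f x)
        linarith
    obtain ⟨V, hV, MV, hMV⟩ :
        ∃ V ∈ nhds x, ∃ MV : ℝ, ∀ y ∈ V ∩ Set.Icc (0:ℝ) T, y < x → |f y| ≤ MV := by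
      rcases eq_or_lt_of_le hx.1 with h | h
      · refine ⟨Set.univ, Filter.univ_mem, 0, fun y hy hyx => absurd hy.2.1 ?_⟩
        rw [← h] at hyx; exact not_le.2 hyx
      · obtain ⟨L, hL⟩ := hf.2 x ⟨h, hx.2⟩
        have h1 : f ⁻¹' Metric.ball L 1 ∈ nhdsWithin x (Set.Iio x) :=
          hL (Metric.ball_mem_nhds L one_pos)
        obtain ⟨U, hUo, hxU, hU⟩ := mem_nhdsWithin.1 h1
        refine ⟨U, hUo.mem_nhds hxU, |L| + 1, fun y hy hyx => ?_⟩
        have hball := hU ⟨hy.1, hyx⟩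
        have hd : |f y - L| < 1 := by
          simpa [Real.dist_eq] using hball
        have h2 := abs_sub_abs_le_abs_sub (f y) L
        linarith
    refine ⟨R ∩ V, Filter.inter_mem hR hV, max MR MV, fun _ y hy => ?_⟩
    rcases le_or_gt x y with h | h
    · exact le_trans (hMR y ⟨hy.1.1, hy.2⟩ h) (le_max_left _ _)
    · exact le_trans (hMV y ⟨hy.1.2, hy.2⟩ h) (le_max_right _ _)

lemma rcll_bounded (f : ℝ → ℝ) (T : ℝ) (hf : RCLL f T) :
    ∃ B : ℝ, ∀ y ∈ Set.Icc (0:ℝ) T, |f y| ≤ B := by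
  choose U hU M hM using rcll_local_bound f T hf
  obtain ⟨t, ht, hcover⟩ := isCompact_Icc.elim_nhds_subcover U (fun x _ => hU x)
  refine ⟨∑ x ∈ t, max (M x) 0, fun y hy => ?_⟩
  obtain ⟨x, hxt, hyU⟩ := Set.mem_iUnion₂.1 (hcover hy)
  calc |f y| ≤ M x := hM x (ht x hxt) y ⟨hyU, hy⟩
    _ ≤ max (M x) 0 := le_max_left _ _
    _ ≤ ∑ x ∈ t, max (M x) 0 :=
        Finset.single_le_sum (fun i _ => le_max_right (M i) 0) hxt

lemma modCont_spec (f : ℝ → ℝ) (δ T B : ℝ)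
    (hB : ∀ y ∈ Set.Icc (0:ℝ) T, |f y| ≤ B) :
    ∀ s ∈ Set.Icc (0:ℝ) T, ∀ t ∈ Set.Icc (0:ℝ) T, |t - s| < δ →
      |f t - f s| ≤ modCont f δ T := by
  intro s hs t ht hst
  have : |f t - f s| ≤ sSup {y : ℝ | ∃ s ∈ Set.Icc (0:ℝ) T, ∃ t ∈ Set.Icc (0:ℝ) T,
      |t - s| < δ ∧ y = |f t - f s|} := by
    apply le_csSup
    · refine ⟨2 * B, ?_⟩
      rintro y ⟨s', hs', t', ht', _, rfl⟩
      have h1 := hB _ ht'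
      have h2 := hB _ hs'
      have h3 : |f t' - f s'| ≤ |f t'| + |f s'| := abs_sub _ _
      linarith
    · exact ⟨s, hs, t, ht, hst, rfl⟩
  exact this

lemma modCont_nonneg' (f : ℝ → ℝ) (δ T B : ℝ) (hδ : 0 < δ) (hT : 0 ≤ T)
    (hB : ∀ y ∈ Set.Icc (0:ℝ) T, |f y| ≤ B) : 0 ≤ modCont f δ T := by
  have := modCont_spec f δ T B hB 0 ⟨le_refl 0, hT⟩ 0 ⟨le_refl 0, hT⟩ (by simpa using hδ)
  exact le_trans (abs_nonneg _) this

theorem modCont_bcorr_le (ψ l r : ℝ → ℝ) (T : ℝ) (hT : 0 < T)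
    (hψ : RCLL ψ T) (hl : RCLL l T) (hr : RCLL r T) :
    ∀ δ > 0, modCont (bcorr ψ l r) δ T ≤ modCont ψ δ T + modCont l δ T := by
  intro δ hδ
  obtain ⟨Bψ, hBψ⟩ := rcll_bounded ψ T hψ
  obtain ⟨Bl, hBl⟩ := rcll_bounded l T hl
  have hT0 : (0:ℝ) ≤ T := hT.le
  have keyψ := modCont_spec ψ δ T Bψ hBψ
  have keyl := modCont_spec l δ T Bl hBl
  have h0ψ : 0 ≤ modCont ψ δ T := modCont_nonneg' ψ δ T Bψ hδ hT0 hBψ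
  have h0l : 0 ≤ modCont l δ T := modCont_nonneg' l δ T Bl hδ hT0 hBl
  have hK0 : 0 ≤ modCont ψ δ T + modCont l δ T := add_nonneg h0ψ h0l
  have gbd : ∀ u ∈ Set.Icc (0:ℝ) T, -(Bψ + Bl) ≤ ψ u - l u := by
    intro u hu
    have h1 := (abs_le.1 (hBψ u hu)).1
    have h2 := (abs_le.1 (hBl u hu)).2
    linarith
  have main : ∀ s ∈ Set.Icc (0:ℝ) T, ∀ t ∈ Set.Icc (0:ℝ) T, s ≤ t → t - s < δ →
      bcorr ψ l r t ≤ bcorr ψ l r s ∧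
        bcorr ψ l r s - bcorr ψ l r t ≤ modCont ψ δ T + modCont l δ T := by
    intro s hs t ht hst hd
    have hne_s : ((fun u => ψ u - l u) '' Set.Icc (0:ℝ) s).Nonempty :=
      ⟨ψ 0 - l 0, 0, ⟨le_refl 0, hs.1⟩, rfl⟩
    have hbdd_t : BddBelow ((fun u => ψ u - l u) '' Set.Icc (0:ℝ) t) := by
      refine ⟨-(Bψ + Bl), ?_⟩
      rintro y ⟨u, hu, rfl⟩
      exact gbd u ⟨hu.1, le_trans hu.2 ht.2⟩
    have hbdd_s : BddBelow ((fun u => ψ u - l u) '' Set.Icc (0:ℝ) s) := by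
      refine ⟨-(Bψ + Bl), ?_⟩
      rintro y ⟨u, hu, rfl⟩
      exact gbd u ⟨hu.1, le_trans hu.2 hs.2⟩
    set c := max (ψ 0 - r 0) 0 with hc
    set ms := sInf ((fun u => ψ u - l u) '' Set.Icc (0:ℝ) s) with hms
    set mt := sInf ((fun u => ψ u - l u) '' Set.Icc (0:ℝ) t) with hmt
    have hmono : mt ≤ ms :=
      csInf_le_csInf hbdd_t hne_s (Set.image_mono (Set.Icc_subset_Icc le_rfl hst))
    have hms_le : ms ≤ ψ s - l s := csInf_le hbdd_s ⟨s, ⟨hs.1, le_refl s⟩, rfl⟩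
    have hmt_ge : ms - (modCont ψ δ T + modCont l δ T) ≤ mt := by
      refine le_csInf ⟨ψ 0 - l 0, 0, ⟨le_refl 0, ht.1⟩, rfl⟩ ?_
      rintro y ⟨u, hu, rfl⟩
      rcases le_or_gt u s with h | h
      · have hle : ms ≤ ψ u - l u := csInf_le hbdd_s ⟨u, ⟨hu.1, h⟩, rfl⟩
        simp only
        linarith
      · have huT : u ∈ Set.Icc (0:ℝ) T := ⟨hu.1, le_trans hu.2 ht.2⟩
        have hus : |u - s| < δ := by
          rw [abs_of_nonneg (by linarith : (0:ℝ) ≤ u - s)]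
          linarith [hu.2]
        have h1 := keyψ s hs u huT hus
        have h2 := keyl s hs u huT hus
        have a1 : ψ s - ψ u ≤ |ψ u - ψ s| := by
          rw [abs_sub_comm]; exact le_abs_self _
        have a2 : l u - l s ≤ |l u - l s| := le_abs_self _
        simp only
        linarith
    have hbt : bcorr ψ l r t = min c mt := rfl
    have hbs : bcorr ψ l r s = min c ms := rfl
    rw [hbt, hbs]
    constructor
    · exact min_le_min le_rfl hmono
    · have hstep : min c ms - (modCont ψ δ T + modCont l δ T) ≤ min c mt := by
        apply le_min
        · linarith [min_le_left c ms]
        · linarith [min_le_right c ms]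
      linarith
  have hgoal : sSup {y : ℝ | ∃ s ∈ Set.Icc (0:ℝ) T, ∃ t ∈ Set.Icc (0:ℝ) T,
      |t - s| < δ ∧ y = |bcorr ψ l r t - bcorr ψ l r s|} ≤
        modCont ψ δ T + modCont l δ T := by
    refine Real.sSup_le ?_ hK0
    rintro y ⟨s, hs, t, ht, hst, rfl⟩
    rcases le_total s t with h | h
    · obtain ⟨h1, h2⟩ := main s hs t ht h
        (by rw [abs_of_nonneg (sub_nonneg.2 h)] at hst; exact hst)
      rw [abs_of_nonpos (by linarith)]
      linarith
    · obtain ⟨h1, h2⟩ := main t ht s hs h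
        (by rw [abs_sub_comm, abs_of_nonneg (sub_nonneg.2 h)] at hst; exact hst)
      rw [abs_of_nonneg (by linarith)]
      linarith
  exact hgoal
end

section
/- With h(t) = sup_{s∈[0,t]} min{ψ(s) − r(s), inf_{u∈[s,t]}(ψ(u) − r(u))} for ψ, r ∈ D[0,T], for any δ > 0 one has ω(h, δ, T) ≤ 2ω(ψ, δ, T) + ω(r, δ, T) + ω(l, δ, T) for any l ∈ D[0,T] (in particular ω(h, δ, T) ≤ 2ω(ψ, δ, T) + ω(r, δ, T)), using the elementary inequality |min{a,b} − min{c,d}| ≤ |a−c| + |b−d|. -/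
open Set Filter

/-- Upper-barrier correction function
`h(t) = sup_{s∈[0,t]} min{ψ(s)−r(s), inf_{u∈[s,t]}(ψ(u)−r(u))}`. -/
noncomputable def hcorr (ψ r : ℝ → ℝ) (t : ℝ) : ℝ :=
  sSup ((fun s => min (ψ s - r s) (sInf ((fun u => ψ u - r u) '' Set.Icc s t))) ''
    Set.Icc (0:ℝ) t)

/-- An RCLL function on `[0,T]` is bounded. -/
lemma rcll_bdd {f : ℝ → ℝ} {T : ℝ} (hT : 0 < T) (hf : RCLL f T) :
    ∃ C : ℝ, ∀ x ∈ Set.Icc (0:ℝ) T, |f x| ≤ C := by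
  have hK : IsCompact (Set.Icc (0:ℝ) T) := isCompact_Icc
  refine hK.induction_on (p := fun S => ∃ C : ℝ, ∀ x ∈ S, |f x| ≤ C) ⟨0, by simp⟩
    (fun s t hst h => h.imp (fun C hC x hx => hC x (hst hx)))
    (fun s t h1 h2 => by
      obtain ⟨C1, h1⟩ := h1; obtain ⟨C2, h2⟩ := h2
      exact ⟨max C1 C2, fun x hx => hx.elim
        (fun h => (h1 x h).trans (le_max_left _ _))
        (fun h => (h2 x h).trans (le_max_right _ _))⟩) ?_
  intro x hx
  have hleft : ∃ C1 : ℝ, ∀ᶠ y in nhdsWithin x (Set.Icc (0:ℝ) T ∩ Set.Iio x), |f y| ≤ C1 := by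
    rcases eq_or_lt_of_le hx.1 with h0 | h0
    · refine ⟨0, ?_⟩
      have he : Set.Icc (0:ℝ) T ∩ Set.Iio x = ∅ := by
        ext y
        simp only [Set.mem_inter_iff, Set.mem_Icc, Set.mem_Iio, Set.mem_empty_iff_false,
          iff_false, not_and]
        rintro ⟨h1, _⟩ h2
        rw [← h0] at h2; linarith
      rw [he, nhdsWithin_empty]
      exact Filter.eventually_bot
    · obtain ⟨L, hL⟩ := hf.2 x ⟨h0, hx.2⟩
      refine ⟨|L| + 1, ?_⟩
      have h1 : ∀ᶠ y in nhdsWithin x (Set.Iio x), |f y - L| < 1 := by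
        have := hL (Metric.ball_mem_nhds L one_pos)
        filter_upwards [this] with y hy
        simpa [Real.dist_eq] using hy
      have h2 : nhdsWithin x (Set.Icc (0:ℝ) T ∩ Set.Iio x) ≤ nhdsWithin x (Set.Iio x) :=
        nhdsWithin_mono x Set.inter_subset_right
      filter_upwards [h1.filter_mono h2] with y hy
      calc |f y| = |(f y - L) + L| := by ring_nf
        _ ≤ |f y - L| + |L| := abs_add_le _ _
        _ ≤ |L| + 1 := by linarith
  have hright : ∃ C2 : ℝ, ∀ᶠ y in nhdsWithin x (Set.Icc (0:ℝ) T ∩ Set.Ici x), |f y| ≤ C2 := by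
    rcases lt_or_eq_of_le hx.2 with hxT | hxT
    · have hc := hf.1 x ⟨hx.1, hxT⟩
      refine ⟨|f x| + 1, ?_⟩
      have h1 : ∀ᶠ y in nhdsWithin x (Set.Ici x), |f y - f x| < 1 := by
        have := hc (Metric.ball_mem_nhds (f x) one_pos)
        filter_upwards [this] with y hy
        simpa [Real.dist_eq] using hy
      have h2 : nhdsWithin x (Set.Icc (0:ℝ) T ∩ Set.Ici x) ≤ nhdsWithin x (Set.Ici x) :=
        nhdsWithin_mono x Set.inter_subset_right
      filter_upwards [h1.filter_mono h2] with y hy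
      calc |f y| = |(f y - f x) + f x| := by ring_nf
        _ ≤ |f y - f x| + |f x| := abs_add_le _ _
        _ ≤ |f x| + 1 := by linarith
    · refine ⟨|f x|, ?_⟩
      have he : Set.Icc (0:ℝ) T ∩ Set.Ici x = {x} := by
        ext y
        simp only [Set.mem_inter_iff, Set.mem_Icc, Set.mem_Ici, Set.mem_singleton_iff]
        constructor
        · rintro ⟨⟨_, h1⟩, h2⟩; rw [← hxT] at h1; linarith
        · rintro rfl; exact ⟨⟨hx.1, hx.2⟩, le_refl _⟩
      rw [he, nhdsWithin_singleton]
      exact Filter.eventually_pure.2 (le_refl _)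
  obtain ⟨C1, h1⟩ := hleft
  obtain ⟨C2, h2⟩ := hright
  have hsplit : Set.Icc (0:ℝ) T
      = (Set.Icc (0:ℝ) T ∩ Set.Iio x) ∪ (Set.Icc (0:ℝ) T ∩ Set.Ici x) := by
    rw [← Set.inter_union_distrib_left, Set.Iio_union_Ici, Set.inter_univ]
  have hev : ∀ᶠ y in nhdsWithin x (Set.Icc (0:ℝ) T), |f y| ≤ max C1 C2 := by
    rw [hsplit, nhdsWithin_union, Filter.eventually_sup]
    exact ⟨h1.mono fun y hy => hy.trans (le_max_left _ _),
           h2.mono fun y hy => hy.trans (le_max_right _ _)⟩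
  exact ⟨{y | |f y| ≤ max C1 C2}, hev, max C1 C2, fun y hy => hy⟩

lemma abs_sub_le_modCont {f : ℝ → ℝ} {C δ T : ℝ} (hC : ∀ x ∈ Set.Icc (0:ℝ) T, |f x| ≤ C)
    {u v : ℝ} (hu : u ∈ Set.Icc (0:ℝ) T) (hv : v ∈ Set.Icc (0:ℝ) T) (huv : |v - u| < δ) :
    |f v - f u| ≤ modCont f δ T := by
  apply le_csSup
  · refine ⟨2 * C, ?_⟩
    rintro y ⟨s, hs, t, ht, _, rfl⟩
    calc |f t - f s| ≤ |f t| + |f s| := abs_sub _ _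
      _ ≤ 2 * C := by have := hC s hs; have := hC t ht; linarith
  · exact ⟨u, hu, v, hv, huv, rfl⟩

lemma modCont_nonneg (f : ℝ → ℝ) (δ T : ℝ) : 0 ≤ modCont f δ T :=
  Real.sSup_nonneg (by rintro y ⟨s, _, t, _, _, rfl⟩; positivity)

/-- `hcorr` written in terms of a single function `φ = ψ - r`. -/
noncomputable def hfun (φ : ℝ → ℝ) (t : ℝ) : ℝ :=
  sSup ((fun s => min (φ s) (sInf (φ '' Set.Icc s t))) '' Set.Icc (0:ℝ) t)

lemma hcorr_eq_hfun (ψ r : ℝ → ℝ) : hcorr ψ r = hfun (fun u => ψ u - r u) := rfl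

/-- Oscillation bound for the correction function. -/
lemma hfun_osc {φ : ℝ → ℝ} {C T M δ : ℝ} (hC : ∀ x ∈ Set.Icc (0:ℝ) T, |φ x| ≤ C)
    (hM : 0 ≤ M)
    (hosc : ∀ u ∈ Set.Icc (0:ℝ) T, ∀ v ∈ Set.Icc (0:ℝ) T, |v - u| < δ → |φ v - φ u| ≤ M)
    {t₁ t₂ : ℝ} (h1 : t₁ ∈ Set.Icc (0:ℝ) T) (h2 : t₂ ∈ Set.Icc (0:ℝ) T)
    (h12 : t₁ ≤ t₂) (hδ : t₂ - t₁ < δ) :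
    |hfun φ t₂ - hfun φ t₁| ≤ M := by
  set G : ℝ → ℝ → ℝ := fun s t => sInf (φ '' Set.Icc s t) with hGdef
  have hsub : ∀ {s t : ℝ}, t ∈ Set.Icc (0:ℝ) T → s ∈ Set.Icc (0:ℝ) t →
      Set.Icc s t ⊆ Set.Icc (0:ℝ) T :=
    fun {s t} ht hs u hu => ⟨hs.1.trans hu.1, hu.2.trans ht.2⟩
  have hbb : ∀ {A : Set ℝ}, A ⊆ Set.Icc (0:ℝ) T → BddBelow (φ '' A) := by
    intro A hA
    refine ⟨-C, ?_⟩
    rintro y ⟨u, hu, rfl⟩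
    linarith [(abs_le.1 (hC u (hA hu))).1]
  have hG_le : ∀ {s t u : ℝ}, t ∈ Set.Icc (0:ℝ) T → s ∈ Set.Icc (0:ℝ) t →
      u ∈ Set.Icc s t → G s t ≤ φ u :=
    fun {s t u} ht hs hu => csInf_le (hbb (hsub ht hs)) ⟨u, hu, rfl⟩
  have hG_ge : ∀ {s t c : ℝ}, s ≤ t → (∀ u ∈ Set.Icc s t, c ≤ φ u) → c ≤ G s t := by
    intro s t c hst h
    refine le_csInf ((Set.nonempty_Icc.2 hst).image φ) ?_
    rintro y ⟨u, hu, rfl⟩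
    exact h u hu
  have heq : ∀ t ∈ Set.Icc (0:ℝ) T, hfun φ t = sSup ((fun s => G s t) '' Set.Icc (0:ℝ) t) := by
    intro t ht
    unfold hfun
    congr 1
    apply Set.image_congr
    intro s hs
    exact min_eq_right (hG_le ht hs ⟨le_refl s, hs.2⟩)
  have h_ub : ∀ t ∈ Set.Icc (0:ℝ) T, ∀ {B : ℝ}, (∀ s ∈ Set.Icc (0:ℝ) t, G s t ≤ B) →
      hfun φ t ≤ B := by
    intro t ht B hB
    rw [heq t ht]
    refine csSup_le ((Set.nonempty_Icc.2 ht.1).image _) ?_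
    rintro y ⟨s, hs, rfl⟩
    exact hB s hs
  have h_lb : ∀ t ∈ Set.Icc (0:ℝ) T, ∀ s ∈ Set.Icc (0:ℝ) t, G s t ≤ hfun φ t := by
    intro t ht s hs
    rw [heq t ht]
    refine le_csSup ⟨C, ?_⟩ ⟨s, hs, rfl⟩
    rintro y ⟨s', hs', rfl⟩
    calc G s' t ≤ φ s' := hG_le ht hs' ⟨le_refl s', hs'.2⟩
      _ ≤ C := (abs_le.1 (hC s' ⟨hs'.1, hs'.2.trans ht.2⟩)).2
  -- Direction 1 : hfun t₁ ≤ hfun t₂ + M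
  have d1 : hfun φ t₁ ≤ hfun φ t₂ + M := by
    refine h_ub t₁ h1 ?_
    intro s hs
    have hst2 : s ≤ t₂ := hs.2.trans h12
    have key : G s t₁ - M ≤ G s t₂ := by
      refine hG_ge hst2 ?_
      intro u hu
      rcases le_or_gt u t₁ with hu1 | hu1
      · have := hG_le h1 hs ⟨hu.1, hu1⟩
        linarith
      · have hφt1 : G s t₁ ≤ φ t₁ := hG_le h1 hs ⟨hs.2, le_refl _⟩
        have huT : u ∈ Set.Icc (0:ℝ) T := ⟨hs.1.trans hu.1, hu.2.trans h2.2⟩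
        have habs : |u - t₁| < δ := by
          rw [abs_of_pos (by linarith)]
          linarith [hu.2]
        have := (abs_le.1 (hosc t₁ h1 u huT habs)).1
        linarith
    have : G s t₂ ≤ hfun φ t₂ := h_lb t₂ h2 s ⟨hs.1, hst2⟩
    linarith
  -- Direction 2 : hfun t₂ ≤ hfun t₁ + M
  have d2 : hfun φ t₂ ≤ hfun φ t₁ + M := by
    refine h_ub t₂ h2 ?_
    intro s hs
    rcases le_or_gt s t₁ with hst | hst
    · have h21 : G s t₂ ≤ G s t₁ := by
        refine csInf_le_csInf (hbb (hsub h2 hs)) ((Set.nonempty_Icc.2 hst).image φ) ?_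
        exact Set.image_mono (Set.Icc_subset_Icc_right h12)
      have := h_lb t₁ h1 s ⟨hs.1, hst⟩
      linarith
    · have hsT : s ∈ Set.Icc (0:ℝ) T := ⟨hs.1, hs.2.trans h2.2⟩
      have habs : |s - t₁| < δ := by
        rw [abs_of_pos (by linarith)]
        linarith [hs.2]
      have hφs : φ s ≤ φ t₁ + M := by
        have := (abs_le.1 (hosc t₁ h1 s hsT habs)).2
        linarith
      have hG1 : G s t₂ ≤ φ s := hG_le h2 hs ⟨le_refl s, hs.2⟩
      have hGt1 : G t₁ t₁ = φ t₁ := by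
        simp [hGdef, Set.Icc_self]
      have := h_lb t₁ h1 t₁ ⟨h1.1, le_refl t₁⟩
      rw [hGt1] at this
      linarith
  rw [abs_le]
  constructor <;> linarith

theorem modCont_hcorr_le (ψ r : ℝ → ℝ) (T : ℝ) (hT : 0 < T)
    (hψ : RCLL ψ T) (hr : RCLL r T) :
    ∀ δ > 0, ∀ l : ℝ → ℝ, RCLL l T →
      modCont (hcorr ψ r) δ T ≤ 2 * modCont ψ δ T + modCont r δ T + modCont l δ T := by
  intro δ hδ l hl
  obtain ⟨Cψ, hCψ⟩ := rcll_bdd hT hψ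
  obtain ⟨Cr, hCr⟩ := rcll_bdd hT hr
  have hCφ : ∀ x ∈ Set.Icc (0:ℝ) T, |ψ x - r x| ≤ Cψ + Cr := by
    intro x hx
    calc |ψ x - r x| ≤ |ψ x| + |r x| := abs_sub _ _
      _ ≤ Cψ + Cr := add_le_add (hCψ x hx) (hCr x hx)
  have hψn := modCont_nonneg ψ δ T
  have hrn := modCont_nonneg r δ T
  have hln := modCont_nonneg l δ T
  set M : ℝ := modCont ψ δ T + modCont r δ T with hMdef
  have hM : 0 ≤ M := by positivity
  have hosc : ∀ u ∈ Set.Icc (0:ℝ) T, ∀ v ∈ Set.Icc (0:ℝ) T, |v - u| < δ →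
      |(ψ v - r v) - (ψ u - r u)| ≤ M := by
    intro u hu v hv huv
    have h1 := abs_sub_le_modCont hCψ hu hv huv
    have h2 := abs_sub_le_modCont hCr hu hv huv
    calc |(ψ v - r v) - (ψ u - r u)| = |(ψ v - ψ u) - (r v - r u)| := by ring_nf
      _ ≤ |ψ v - ψ u| + |r v - r u| := abs_sub _ _
      _ ≤ M := add_le_add h1 h2
  have hkey : ∀ s ∈ Set.Icc (0:ℝ) T, ∀ t ∈ Set.Icc (0:ℝ) T, |t - s| < δ →
      |hcorr ψ r t - hcorr ψ r s| ≤ M := by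
    intro s hs t ht hst
    rcases le_total s t with h | h
    · have : t - s < δ := lt_of_le_of_lt (le_abs_self _) hst
      rw [hcorr_eq_hfun]
      exact hfun_osc hCφ hM hosc hs ht h this
    · have hst' : |s - t| < δ := by rwa [abs_sub_comm]
      have : s - t < δ := lt_of_le_of_lt (le_abs_self _) hst'
      rw [hcorr_eq_hfun, abs_sub_comm]
      exact hfun_osc hCφ hM hosc ht hs h this
  refine Real.sSup_le ?_ (by linarith)
  rintro y ⟨s, hs, t, ht, hst, rfl⟩
  have := hkey s hs t ht hst
  linarith
end
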